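/- Let (θ_k)_{k≥0} be real numbers with Σ_{j≥0}|θ_j| < ∞, and for each n and d let Σ_{n,d} be the n×n Toeplitz matrix with (i,j) entry γ_{X^{(d)}}(|i−j|) and let \bar{Σ}_{n,d} be the n×n Toeplitz matrix with (i,j) entry γ_X(|i−j|) if |i−j| ≤ d and 0 otherwise. Then limsup_{n→∞} d_BL²(F^{Σ_{n,d}}, F^{\bar{Σ}_{n,d}}) ≤ 2 Σ_{j=0}^d ( Σ_{k=d−j+1}^∞ θ_k θ_{j+k} )². -/

import Mathlib

open MeasureTheory Filter Finset ProbabilityTheory Topology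
open scoped Classical ENNReal NNReal

noncomputable section

/-- Empirical spectral distribution of a real `n × n` matrix `A`; defined as the uniform
probability measure on the eigenvalues when `A` is symmetric (Hermitian), `0` otherwise. -/
noncomputable def ESD {n : ℕ} (A : Matrix (Fin n) (Fin n) ℝ) : Measure ℝ :=
  if hA : A.IsHermitian then
    ((n : ℝ≥0∞))⁻¹ • ∑ i : Fin n, Measure.dirac (hA.eigenvalues i)
  else 0

/-- Weak convergence of a sequence of measures on `ℝ`, tested against bounded
continuous functions. -/
def WeakLim (μ : ℕ → Measure ℝ) (ν : Measure ℝ) : Prop :=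
  ∀ f : BoundedContinuousFunction ℝ ℝ,
    Tendsto (fun n => ∫ x, f x ∂(μ n)) atTop (𝓝 (∫ x, f x ∂ν))

/-- The bounded Lipschitz metric on measures on `ℝ`. -/
noncomputable def dBL (μ ν : Measure ℝ) : ℝ :=
  sSup { r : ℝ | ∃ f : ℝ → ℝ, (∀ x, |f x| ≤ 1) ∧ LipschitzWith 1 f ∧
    r = |(∫ x, f x ∂μ) - (∫ x, f x ∂ν)| }

/-- The sample autocovariance `γ̂_Y(k) = n⁻¹ ∑_{i=1}^{n-|k|} Y_i Y_{i+|k|}`. -/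
noncomputable def sampleACV (Y : ℤ → ℝ) (n : ℕ) (k : ℤ) : ℝ :=
  (n : ℝ)⁻¹ * ∑ i ∈ Finset.Icc (1 : ℤ) ((n : ℤ) - |k|), Y i * Y (i + |k|)

/-- The sample autocovariance matrix `Γ_n(Y) = ((γ̂_Y(i-j)))`. -/
noncomputable def sampleACVM (Y : ℤ → ℝ) (n : ℕ) : Matrix (Fin n) (Fin n) ℝ :=
  Matrix.of fun i j => sampleACV Y n (((i : ℕ) : ℤ) - ((j : ℕ) : ℤ))

/-- The modified sample autocovariance `γ*_Y(k) = n⁻¹ ∑_{i=1}^{n} Y_i Y_{i+|k|}`. -/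
noncomputable def sampleACVstar (Y : ℤ → ℝ) (n : ℕ) (k : ℤ) : ℝ :=
  (n : ℝ)⁻¹ * ∑ i ∈ Finset.Icc (1 : ℤ) (n : ℤ), Y i * Y (i + |k|)

/-- The modified sample autocovariance matrix `Γ*_n(Y) = ((γ*_Y(|i-j|)))`. -/
noncomputable def sampleACVMstar (Y : ℤ → ℝ) (n : ℕ) : Matrix (Fin n) (Fin n) ℝ :=
  Matrix.of fun i j => sampleACVstar Y n (((i : ℕ) : ℤ) - ((j : ℕ) : ℤ))

/-- The Type I banded sample ACVM: entries with `|i - j| ≥ m` are replaced by `0`. -/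
noncomputable def bandACVM (Y : ℤ → ℝ) (n m : ℕ) : Matrix (Fin n) (Fin n) ℝ :=
  Matrix.of fun i j =>
    if |((i : ℕ) : ℤ) - ((j : ℕ) : ℤ)| < (m : ℤ) then
      sampleACV Y n (((i : ℕ) : ℤ) - ((j : ℕ) : ℤ)) else 0

/-- The Type II banded sample ACVM: the `m × m` principal submatrix of `Γ_n(Y)`. -/
noncomputable def subACVM (Y : ℤ → ℝ) (n m : ℕ) : Matrix (Fin m) (Fin m) ℝ :=
  Matrix.of fun i j => sampleACV Y n (((i : ℕ) : ℤ) - ((j : ℕ) : ℤ))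

/-- The tapered sample ACVM `Γ_{n,K}(Y) = ((K((i-j)/m) γ̂_Y(i-j)))`. -/
noncomputable def taperACVM (K : ℝ → ℝ) (Y : ℤ → ℝ) (n m : ℕ) : Matrix (Fin n) (Fin n) ℝ :=
  Matrix.of fun i j =>
    K (((((i : ℕ) : ℤ) - ((j : ℕ) : ℤ) : ℤ) : ℝ) / (m : ℝ)) *
      sampleACV Y n (((i : ℕ) : ℤ) - ((j : ℕ) : ℤ))

/-- The MA(d) process `X_{t,d} = ∑_{k=0}^{d} θ_k ε_{t-k}`. -/
noncomputable def MAfin {Ω : Type*} (θ : ℕ → ℝ) (d : ℕ) (ε : ℤ → Ω → ℝ) (ω : Ω) (t : ℤ) : ℝ :=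
  ∑ k ∈ Finset.range (d + 1), θ k * ε (t - (k : ℤ)) ω

/-- The MA(∞) process `X_t = ∑_{k=0}^{∞} θ_k ε_{t-k}`. -/
noncomputable def MAinf {Ω : Type*} (θ : ℕ → ℝ) (ε : ℤ → Ω → ℝ) (ω : Ω) (t : ℤ) : ℝ :=
  ∑' k : ℕ, θ k * ε (t - (k : ℤ)) ω

/-- Assumption A(a): `{ε_t}` are i.i.d. with mean `0` and variance `1`. -/
def AssumptionAa {Ω : Type*} [MeasureSpace Ω] (ε : ℤ → Ω → ℝ) : Prop :=
  IsProbabilityMeasure (ℙ : Measure Ω) ∧ (∀ t, Measurable (ε t)) ∧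
  iIndepFun ε ℙ ∧
  (∀ t, Measure.map (ε t) ℙ = Measure.map (ε 0) ℙ) ∧
  (∀ t, (∫ ω, ε t ω) = 0) ∧ (∀ t, (∫ ω, (ε t ω) ^ 2) = 1)

/-- Assumption A(b): `{ε_t}` are independent, uniformly bounded, with mean `0` and
variance `1`. -/
def AssumptionAb {Ω : Type*} [MeasureSpace Ω] (ε : ℤ → Ω → ℝ) : Prop :=
  IsProbabilityMeasure (ℙ : Measure Ω) ∧ (∀ t, Measurable (ε t)) ∧
  iIndepFun ε ℙ ∧
  (∃ C : ℝ, ∀ t ω, |ε t ω| ≤ C) ∧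
  (∀ t, (∫ ω, ε t ω) = 0) ∧ (∀ t, (∫ ω, (ε t ω) ^ 2) = 1)

/-- The ACVF of the MA(d) process: `γ_{X^{(d)}}(j) = ∑_{k=0}^{d-j} θ_k θ_{j+k}`. -/
noncomputable def gammaFin (θ : ℕ → ℝ) (d j : ℕ) : ℝ :=
  if j ≤ d then ∑ k ∈ Finset.range (d - j + 1), θ k * θ (j + k) else 0

/-- The ACVF of the MA(∞) process: `γ_X(j) = ∑_{k=0}^{∞} θ_k θ_{j+k}`. -/
noncomputable def gammaInf (θ : ℕ → ℝ) (j : ℕ) : ℝ :=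
  ∑' k : ℕ, θ k * θ (j + k)

/-- The spectral density of the MA(∞) process:
`f_X(t) = ∑_{k=-∞}^{∞} exp(-2πitk) γ_X(|k|) = γ_X(0) + 2 ∑_{k≥1} cos(2πtk) γ_X(k)`. -/
noncomputable def specDensityInf (θ : ℕ → ℝ) (t : ℝ) : ℝ :=
  gammaInf θ 0 + 2 * ∑' k : ℕ, Real.cos (2 * Real.pi * t * ((k : ℝ) + 1)) * gammaInf θ (k + 1)

/-- The spectral density of the MA(d) process. -/
noncomputable def specDensityFin (θ : ℕ → ℝ) (d : ℕ) (t : ℝ) : ℝ :=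
  gammaFin θ d 0 + 2 * ∑ k ∈ Finset.Icc 1 d, Real.cos (2 * Real.pi * t * (k : ℝ)) * gammaFin θ d k

/-- The law of `f(U)` where `U` is uniform on `(0, 1]`. -/
noncomputable def specLaw (f : ℝ → ℝ) : Measure ℝ :=
  Measure.map f (MeasureTheory.volume.restrict (Set.Ioc (0 : ℝ) 1))

/-- `a` is d-matched: every coordinate is within `d` of some other coordinate. -/
def dMatched (d : ℕ) {h : ℕ} (a : Fin (2 * h) → ℕ) : Prop :=
  ∀ i, ∃ j, j ≠ i ∧ |(a i : ℤ) - (a j : ℤ)| ≤ (d : ℤ)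

/-- `a` is minimal d-matched: there is a partition of the index set into pairs
(a fixed-point-free involution) such that `|a_x - a_y| ≤ d` holds exactly on pairs. -/
def minimalMatched (d : ℕ) {h : ℕ} (a : Fin (2 * h) → ℕ) : Prop :=
  ∃ σ : Equiv.Perm (Fin (2 * h)), (∀ x, σ x ≠ x) ∧ (∀ x, σ (σ x) = x) ∧
    ∀ x y, x ≠ y → (|(a x : ℤ) - (a y : ℤ)| ≤ (d : ℤ) ↔ σ x = y)

/-!
Write `A = U diag(λ) Uᵀ` and `B = V diag(μ) Vᵀ` with `U`, `V` orthogonal. The Frobenius norm is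
invariant under `X ↦ Uᵀ X V`, so `‖A - B‖²_F = ∑ᵢⱼ Wᵢⱼ² (λᵢ - μⱼ)²` for `W = Uᵀ V`, and `(Wᵢⱼ²)` is
doubly stochastic. For a `1`-Lipschitz `f`, `∑ f(λᵢ) - ∑ f(μⱼ) = ∑ᵢⱼ Wᵢⱼ² (f(λᵢ) - f(μⱼ))`, which
Cauchy–Schwarz bounds by `√(n ‖A - B‖²_F)`; hence `d_BL²(F^A, F^B) ≤ n⁻¹ ‖A - B‖²_F`, with no
matching of eigenvalues needed.

The two Toeplitz matrices agree beyond lag `d`, and at lag `j ≤ d` they differ by the tail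
`∑_{k > d - j} θ_k θ_{j+k}`. Each lag occurs at most twice in a row, so `n⁻¹ ‖Σ_{n,d} - Σ̄_{n,d}‖²_F`
is at most twice the sum of the squared tails, for every `n`.
-/

namespace Matrix

variable {n : Type*} [Fintype n]

theorem sum_sq_entries_eq_trace (X : Matrix n n ℝ) :
    ∑ i, ∑ j, X i j ^ 2 = trace (X * star X) := by
  simp [trace, mul_apply, sq]

variable [DecidableEq n]

theorem sum_sq_entries_star_mul_mul_of_mem_unitaryGroup {U V : Matrix n n ℝ}
    (hU : U ∈ unitaryGroup n ℝ) (hV : V ∈ unitaryGroup n ℝ) (X : Matrix n n ℝ) :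
    ∑ i, ∑ j, (star U * X * V) i j ^ 2 = ∑ i, ∑ j, X i j ^ 2 := by
  rw [sum_sq_entries_eq_trace, sum_sq_entries_eq_trace, star_mul, star_mul, star_star]
  calc trace (star U * X * V * (star V * (star X * U)))
      = trace (star U * (X * star X) * U) := by
        simp only [Matrix.mul_assoc, ← Matrix.mul_assoc V, Unitary.mul_star_self_of_mem hV,
          Matrix.one_mul]
    _ = trace (X * star X) := by
        rw [trace_mul_cycle, Unitary.mul_star_self_of_mem hU, Matrix.one_mul]

theorem sum_sq_sub_eq_of_star_mul_mul_eq_diagonal {A B U V : Matrix n n ℝ}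
    (hU : U ∈ unitaryGroup n ℝ) (hV : V ∈ unitaryGroup n ℝ) {l m : n → ℝ}
    (hAU : star U * A * U = diagonal l) (hBV : star V * B * V = diagonal m) :
    ∑ i, ∑ j, (A i j - B i j) ^ 2 = ∑ i, ∑ j, (star U * V) i j ^ 2 * (l i - m j) ^ 2 := by
  have hA : star U * A * V = diagonal l * (star U * V) := by
    rw [← hAU, Matrix.mul_assoc _ U, ← Matrix.mul_assoc U, Unitary.mul_star_self_of_mem hU,
      Matrix.one_mul]
  have hB : star U * B * V = star U * V * diagonal m := by
    rw [← hBV, ← Matrix.mul_assoc, ← Matrix.mul_assoc, Matrix.mul_assoc _ V,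
      Unitary.mul_star_self_of_mem hV, Matrix.mul_one]
  calc ∑ i, ∑ j, (A i j - B i j) ^ 2 = ∑ i, ∑ j, (star U * (A - B) * V) i j ^ 2 :=
        (sum_sq_entries_star_mul_mul_of_mem_unitaryGroup hU hV (A - B)).symm
    _ = _ := by
        simp only [Matrix.mul_sub, Matrix.sub_mul, hA, hB, sub_apply, diagonal_mul, mul_diagonal]
        exact sum_congr rfl fun i _ => sum_congr rfl fun j _ => by ring

theorem IsHermitian.star_eigenvectorUnitary_mul_mul {A : Matrix n n ℝ} (hA : A.IsHermitian) :
    star (hA.eigenvectorUnitary : Matrix n n ℝ) * A * hA.eigenvectorUnitary =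
      diagonal hA.eigenvalues :=
  (Unitary.conjStarAlgAut_star_apply _ _).symm.trans hA.conjStarAlgAut_star_eigenvectorUnitary

theorem map_sq_mem_doublyStochastic_of_mem_unitaryGroup {W : Matrix n n ℝ}
    (hW : W ∈ unitaryGroup n ℝ) : W.map (· ^ 2) ∈ doublyStochastic ℝ n := by
  refine mem_doublyStochastic_iff_sum.mpr ⟨fun i j => sq_nonneg _, fun i => ?_, fun j => ?_⟩
  · simpa [mul_apply, sq] using congrFun₂ (mem_unitaryGroup_iff.mp hW) i i
  · simpa [mul_apply, sq] using congrFun₂ (mem_unitaryGroup_iff'.mp hW) j j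

theorem sq_sum_comp_sub_sum_comp_le_of_mem_doublyStochastic {P : Matrix n n ℝ}
    (hP : P ∈ doublyStochastic ℝ n) {f : ℝ → ℝ} (hf : LipschitzWith 1 f) (l m : n → ℝ) :
    (∑ i, f (l i) - ∑ j, f (m j)) ^ 2 ≤
      Fintype.card n * ∑ i, ∑ j, P i j * (l i - m j) ^ 2 := by
  have hdiff : ∑ i, f (l i) - ∑ j, f (m j) = ∑ i, ∑ j, P i j * (f (l i) - f (m j)) := by
    simp only [mul_sub, sum_sub_distrib, ← sum_mul, sum_row_of_mem_doublyStochastic hP, one_mul]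
    rw [sum_comm]
    simp only [← sum_mul, sum_col_of_mem_doublyStochastic hP, one_mul]
  have habs : |∑ i, f (l i) - ∑ j, f (m j)| ≤ ∑ i, ∑ j, P i j * |l i - m j| := by
    rw [hdiff]
    refine (abs_sum_le_sum_abs _ _).trans (sum_le_sum fun i _ => ?_)
    refine (abs_sum_le_sum_abs _ _).trans (sum_le_sum fun j _ => ?_)
    rw [abs_mul, abs_of_nonneg (nonneg_of_mem_doublyStochastic hP)]
    exact mul_le_mul_of_nonneg_left (by simpa [Real.dist_eq] using hf.dist_le_mul (l i) (m j))
      (nonneg_of_mem_doublyStochastic hP)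
  have hCS : (∑ i, ∑ j, P i j * |l i - m j|) ^ 2 ≤
      (∑ i, ∑ j, P i j) * ∑ i, ∑ j, P i j * (l i - m j) ^ 2 := by
    simp only [← Fintype.sum_prod_type', ← Fintype.sum_prod_type' (f := fun i j => P i j)]
    refine sum_sq_le_sum_mul_sum_of_sq_le_mul _ (fun x _ => nonneg_of_mem_doublyStochastic hP)
      (fun x _ => mul_nonneg (nonneg_of_mem_doublyStochastic hP) (sq_nonneg _))
      (fun x _ => le_of_eq ?_)
    rw [mul_pow, sq_abs]
    ring
  have hmass : ∑ i, ∑ j, P i j = Fintype.card n := by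
    simp [sum_row_of_mem_doublyStochastic hP]
  rw [← sq_abs]
  calc |∑ i, f (l i) - ∑ j, f (m j)| ^ 2 ≤ (∑ i, ∑ j, P i j * |l i - m j|) ^ 2 := by
        gcongr
    _ ≤ _ := hmass ▸ hCS

theorem IsHermitian.sq_sum_comp_eigenvalues_sub_le {A B : Matrix n n ℝ} (hA : A.IsHermitian)
    (hB : B.IsHermitian) {f : ℝ → ℝ} (hf : LipschitzWith 1 f) :
    (∑ i, f (hA.eigenvalues i) - ∑ i, f (hB.eigenvalues i)) ^ 2 ≤
      Fintype.card n * ∑ i, ∑ j, (A i j - B i j) ^ 2 := by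
  have hU := hA.eigenvectorUnitary.2
  have hV := hB.eigenvectorUnitary.2
  rw [sum_sq_sub_eq_of_star_mul_mul_eq_diagonal hU hV hA.star_eigenvectorUnitary_mul_mul
    hB.star_eigenvectorUnitary_mul_mul]
  exact sq_sum_comp_sub_sum_comp_le_of_mem_doublyStochastic
    (map_sq_mem_doublyStochastic_of_mem_unitaryGroup (mul_mem (Unitary.star_mem hU) hV)) hf _ _

end Matrix

theorem integral_ESD {n : ℕ} {A : Matrix (Fin n) (Fin n) ℝ} (hA : A.IsHermitian) (f : ℝ → ℝ) :
    ∫ x, f x ∂(ESD A) = (n : ℝ)⁻¹ * ∑ i, f (hA.eigenvalues i) := by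
  rw [ESD, dif_pos hA, integral_smul_measure,
    integral_finsetSum_measure fun i _ => integrable_dirac enorm_lt_top]
  simp [integral_dirac, smul_eq_mul]

theorem dBL_sq_le_of_forall {μ ν : Measure ℝ} {c : ℝ}
    (h : ∀ f : ℝ → ℝ, (∀ x, |f x| ≤ 1) → LipschitzWith 1 f →
      (∫ x, f x ∂μ - ∫ x, f x ∂ν) ^ 2 ≤ c) :
    dBL μ ν ^ 2 ≤ c := by
  have hbound : ∀ r ∈ {r : ℝ | ∃ f : ℝ → ℝ, (∀ x, |f x| ≤ 1) ∧ LipschitzWith 1 f ∧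
      r = |(∫ x, f x ∂μ) - (∫ x, f x ∂ν)|}, 0 ≤ r ∧ r ≤ √c := by
    rintro r ⟨f, hf₁, hf, rfl⟩
    exact ⟨abs_nonneg _, Real.abs_le_sqrt (h f hf₁ hf)⟩
  have hc : 0 ≤ c := by
    simpa using h (fun _ => 0) (by simp) ((LipschitzWith.const 0).weaken zero_le_one)
  calc dBL μ ν ^ 2 ≤ √c ^ 2 := by
        gcongr
        · exact Real.sSup_nonneg fun r hr => (hbound r hr).1
        · exact Real.sSup_le (fun r hr => (hbound r hr).2) (Real.sqrt_nonneg c)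
    _ = c := Real.sq_sqrt hc

theorem dBL_ESD_sq_le {n : ℕ} {A B : Matrix (Fin n) (Fin n) ℝ} (hA : A.IsHermitian)
    (hB : B.IsHermitian) :
    dBL (ESD A) (ESD B) ^ 2 ≤ (n : ℝ)⁻¹ * ∑ i, ∑ j, (A i j - B i j) ^ 2 := by
  refine dBL_sq_le_of_forall fun f _ hf => ?_
  rw [integral_ESD hA, integral_ESD hB, ← mul_sub, mul_pow]
  calc (n : ℝ)⁻¹ ^ 2 * (∑ i, f (hA.eigenvalues i) - ∑ i, f (hB.eigenvalues i)) ^ 2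
      ≤ (n : ℝ)⁻¹ ^ 2 * (n * ∑ i, ∑ j, (A i j - B i j) ^ 2) := by
        gcongr
        simpa using hA.sq_sum_comp_eigenvalues_sub_le hB hf
    _ = (n : ℝ)⁻¹ * ∑ i, ∑ j, (A i j - B i j) ^ 2 := by
        rcases eq_or_ne (n : ℝ) 0 with hn | hn
        · simp [hn]
        · field_simp

def symmetricToeplitz (c : ℕ → ℝ) (n : ℕ) : Matrix (Fin n) (Fin n) ℝ :=
  Matrix.of fun i j => c (((i : ℕ) : ℤ) - ((j : ℕ) : ℤ)).natAbs

theorem isHermitian_symmetricToeplitz (c : ℕ → ℝ) (n : ℕ) :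
    (symmetricToeplitz c n).IsHermitian := by
  ext i j
  simp only [symmetricToeplitz, Matrix.conjTranspose_apply, Matrix.of_apply, star_trivial]
  rw [← Int.natAbs_neg, neg_sub]

theorem sum_ite_le_sum_range_of_injOn {ι : Type*} {s : Finset ι} {e : ι → ℕ}
    (he : Set.InjOn e s) {g : ℕ → ℝ} (hg : ∀ m, 0 ≤ g m) (d : ℕ) :
    ∑ i ∈ s, (if e i ≤ d then g (e i) else 0) ≤ ∑ m ∈ range (d + 1), g m := by
  rw [← sum_filter, ← sum_image (he.mono (filter_subset _ _))]
  refine sum_le_sum_of_subset_of_nonneg (fun m hm => ?_) fun m _ _ => hg m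
  obtain ⟨i, hi, rfl⟩ := mem_image.mp hm
  exact mem_range.mpr (Nat.lt_succ_of_le (mem_filter.mp hi).2)

theorem sum_band_le {n : ℕ} {g : ℕ → ℝ} (hg : ∀ m, 0 ≤ g m) (d : ℕ) (i : Fin n) :
    ∑ j : Fin n, (if (((i : ℕ) : ℤ) - ((j : ℕ) : ℤ)).natAbs ≤ d then
        g (((i : ℕ) : ℤ) - ((j : ℕ) : ℤ)).natAbs else 0) ≤ 2 * ∑ m ∈ range (d + 1), g m := by
  rw [← sum_filter_add_sum_filter_not univ (· ≤ i), two_mul]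
  gcongr <;> refine sum_ite_le_sum_range_of_injOn (fun a ha b hb hab => ?_) hg d <;>
    simp only [mem_coe, mem_filter, mem_univ, true_and, not_le] at ha hb <;>
    exact Fin.ext (by omega)

theorem sum_sq_sub_symmetricToeplitz_le {c c' : ℕ → ℝ} {d : ℕ} (hcc' : ∀ m, d < m → c m = c' m)
    {n : ℕ} (i : Fin n) :
    ∑ j, (symmetricToeplitz c n i j - symmetricToeplitz c' n i j) ^ 2 ≤
      2 * ∑ m ∈ range (d + 1), (c m - c' m) ^ 2 := by
  refine le_of_eq_of_le (sum_congr rfl fun j _ => ?_) (sum_band_le (fun m => sq_nonneg _) d i)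
  split_ifs with hij
  · rfl
  · simp [symmetricToeplitz, hcc' _ (not_le.mp hij)]

theorem dBL_ESD_symmetricToeplitz_sq_le {c c' : ℕ → ℝ} {d : ℕ} (hcc' : ∀ m, d < m → c m = c' m)
    (n : ℕ) :
    dBL (ESD (symmetricToeplitz c n)) (ESD (symmetricToeplitz c' n)) ^ 2 ≤
      2 * ∑ m ∈ range (d + 1), (c m - c' m) ^ 2 := by
  set C := 2 * ∑ m ∈ range (d + 1), (c m - c' m) ^ 2
  have hC : 0 ≤ C := by positivity
  refine (dBL_ESD_sq_le (isHermitian_symmetricToeplitz c n)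
    (isHermitian_symmetricToeplitz c' n)).trans ?_
  calc (n : ℝ)⁻¹ * ∑ i, ∑ j, (symmetricToeplitz c n i j - symmetricToeplitz c' n i j) ^ 2
      ≤ (n : ℝ)⁻¹ * (n * C) := by
        gcongr
        simpa using sum_le_card_nsmul univ _ C fun i _ => sum_sq_sub_symmetricToeplitz_le hcc' i
    _ ≤ C := by
        rcases eq_or_ne (n : ℝ) 0 with hn | hn
        · simpa [hn] using hC
        · rw [inv_mul_cancel_left₀ hn]

theorem summable_mul_shift {θ : ℕ → ℝ} (hθ : Summable fun j => |θ j|) (m : ℕ) :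
    Summable fun k => θ k * θ (m + k) :=
  (hθ.mul_right (∑' j, |θ j|)).of_norm_bounded fun k => by
    rw [Real.norm_eq_abs, abs_mul]
    exact mul_le_mul_of_nonneg_left (hθ.le_tsum (m + k) fun _ _ => abs_nonneg _) (abs_nonneg _)

theorem gammaInf_sub_gammaFin {θ : ℕ → ℝ} (hθ : Summable fun j => |θ j|) {d m : ℕ} (hm : m ≤ d) :
    gammaInf θ m - gammaFin θ d m = ∑' k, θ (d - m + 1 + k) * θ (m + (d - m + 1 + k)) := by
  rw [gammaInf, gammaFin, if_pos hm,
    ← (summable_mul_shift hθ m).sum_add_tsum_nat_add (d - m + 1), add_sub_cancel_left]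
  simp only [add_comm _ (d - m + 1)]

theorem limsup_dBL_toeplitz_general (θ : ℕ → ℝ)
    (hBb : Summable fun j => |θ j|) (d : ℕ) :
    Filter.limsup
        (fun n : ℕ =>
          dBL
            (ESD (Matrix.of fun i j : Fin n =>
              gammaFin θ d ((((i : ℕ) : ℤ) - ((j : ℕ) : ℤ)).natAbs)))
            (ESD (Matrix.of fun i j : Fin n =>
              if (((i : ℕ) : ℤ) - ((j : ℕ) : ℤ)).natAbs ≤ d then
                gammaInf θ ((((i : ℕ) : ℤ) - ((j : ℕ) : ℤ)).natAbs)
              else 0)) ^ 2)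
        atTop
      ≤ 2 * ∑ j ∈ Finset.range (d + 1),
          (∑' k : ℕ, θ (d - j + 1 + k) * θ (j + (d - j + 1 + k))) ^ 2 := by
  have hagree : ∀ m, d < m → gammaFin θ d m = if m ≤ d then gammaInf θ m else 0 := fun m hm => by
    simp [gammaFin, not_le.mpr hm]
  have hlag : ∀ m ∈ range (d + 1), (gammaFin θ d m - if m ≤ d then gammaInf θ m else 0) ^ 2 =
      (∑' k, θ (d - m + 1 + k) * θ (m + (d - m + 1 + k))) ^ 2 := fun m hm => by
    rw [if_pos (Nat.lt_succ_iff.mp (mem_range.mp hm)), ← gammaInf_sub_gammaFin hBb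
      (Nat.lt_succ_iff.mp (mem_range.mp hm)), ← neg_sub, neg_sq]
  refine limsup_le_of_le (isCoboundedUnder_le_of_le atTop fun n => sq_nonneg _)
    (Eventually.of_forall fun n => ?_)
  rw [← sum_congr rfl hlag]
  exact dBL_ESD_symmetricToeplitz_sq_le hagree n

/-- For the deterministic Toeplitz matrices `Σ_{n,d}` (entries `γ_{X^{(d)}}(|i-j|)`) and
`Σ̄_{n,d}` (entries `γ_X(|i-j|)` for `|i-j| ≤ d`, `0` otherwise),
`limsup_n d_BL²(F^{Σ_{n,d}}, F^{Σ̄_{n,d}}) ≤ 2 ∑_{j=0}^d (∑_{k=d-j+1}^∞ θ_k θ_{j+k})²`. -/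
theorem limsup_dBL_toeplitz (θ : ℕ → ℝ) (hθ0 : θ 0 ≠ 0)
    (hBb : Summable fun j => |θ j|) (d : ℕ) :
    Filter.limsup
        (fun n : ℕ =>
          dBL
            (ESD (Matrix.of fun i j : Fin n =>
              gammaFin θ d ((((i : ℕ) : ℤ) - ((j : ℕ) : ℤ)).natAbs)))
            (ESD (Matrix.of fun i j : Fin n =>
              if (((i : ℕ) : ℤ) - ((j : ℕ) : ℤ)).natAbs ≤ d then
                gammaInf θ ((((i : ℕ) : ℤ) - ((j : ℕ) : ℤ)).natAbs)
              else 0)) ^ 2)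
        atTop
      ≤ 2 * ∑ j ∈ Finset.range (d + 1),
          (∑' k : ℕ, θ (d - j + 1 + k) * θ (j + (d - j + 1 + k))) ^ 2 :=
  limsup_dBL_toeplitz_general θ hBb d
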